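/- arXiv:2001.07403 — 2 statements merged into one kernel-verified Lean document; each statement's English description precedes it below -/
import Mathlib

section
/- Let μ = (μ₁,μ₂) with μ₁ ≠ μ₂, n = μ₁ + μ₂ odd. Then D⁺(μ) = (r₁ − r₂)^n is μ-symmetric with gist F̊_n(z₁,z₂,z₃) = (((n−1)z₁² − 2n z₂)/(μ₁μ₂))^{(n−3)/2} · (k₁z₁³ + k₂z₁z₂ + k₃z₃), where k₁ = −(n−1)(n−2)/d, k₂ = 3n(n−2)/d, k₃ = −3n²/d, d = μ₁μ₂(μ₁−μ₂); i.e., F̊_n(ē₁,ē₂,ē₃) = (r₁−r₂)^n. -/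
/-!
Under `σ_μ` the power sums become `p̄_k = μ₁ r₁ᵏ + μ₂ r₂ᵏ`, and Newton's identities express
`ē₁ = p̄₁`, `2 ē₂ = p̄₁² - p̄₂`, `3 ē₃ = p̄₃ - p̄₁ p̄₂ + ē₂ p̄₁` through them. Eliminating the power sums
gives `μ₁ μ₂ (r₁ - r₂)² = (n - 1) ē₁² - 2 n ē₂` and
`μ₁ μ₂ (μ₁ - μ₂) (r₁ - r₂)³ = -(n - 1)(n - 2) ē₁³ + 3 n (n - 2) ē₁ ē₂ - 3 n² ē₃`, so the two factors of
the gist evaluate to `(r₁ - r₂)²` and `(r₁ - r₂)³`, and `2 · (n - 3)/2 + 3 = n` for odd `n ≥ 3`.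
The gist evaluated at `e₁, e₂, e₃` is a symmetric lift of `(r₁ - r₂)ⁿ`.
-/

open MvPolynomial

/-- Canonical specialization for a two-part partition `μ = (μ₁,μ₂)`:
`x₁,…,x_{μ₁} ↦ r₁`, `x_{μ₁+1},…,x_n ↦ r₂`. -/
noncomputable def sigma2 (K : Type*) [Field K] (μ1 μ2 : ℕ) :
    MvPolynomial (Fin (μ1 + μ2)) K →ₐ[K] MvPolynomial (Fin 2) K :=
  MvPolynomial.aeval (fun i : Fin (μ1 + μ2) => if (i : ℕ) < μ1 then X 0 else X 1)

/-- `ē_k = σ_μ(e_k)` for the two-part partition `μ = (μ₁,μ₂)`. -/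
noncomputable def ebar (K : Type*) [Field K] (μ1 μ2 k : ℕ) : MvPolynomial (Fin 2) K :=
  sigma2 K μ1 μ2 (esymm (Fin (μ1 + μ2)) K k)

section TwoPointIdentities

variable {R : Type*} [CommRing R] {a b m₁ m₂ e₂ e₃ : R}

theorem mul_sq_sub_of_newton (h₂ : 2 * e₂ = (m₁ * a + m₂ * b) ^ 2 - (m₁ * a ^ 2 + m₂ * b ^ 2)) :
    m₁ * m₂ * (a - b) ^ 2 = (m₁ + m₂ - 1) * (m₁ * a + m₂ * b) ^ 2 - 2 * (m₁ + m₂) * e₂ := by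
  linear_combination (m₁ + m₂) * h₂

theorem mul_cube_sub_of_newton (h₂ : 2 * e₂ = (m₁ * a + m₂ * b) ^ 2 - (m₁ * a ^ 2 + m₂ * b ^ 2))
    (h₃ : 3 * e₃ = (m₁ * a ^ 3 + m₂ * b ^ 3) - (m₁ * a + m₂ * b) * (m₁ * a ^ 2 + m₂ * b ^ 2)
      + e₂ * (m₁ * a + m₂ * b)) :
    m₁ * m₂ * (m₁ - m₂) * (a - b) ^ 3 = -((m₁ + m₂ - 1) * (m₁ + m₂ - 2)) * (m₁ * a + m₂ * b) ^ 3
      + 3 * (m₁ + m₂) * (m₁ + m₂ - 2) * ((m₁ * a + m₂ * b) * e₂) - 3 * (m₁ + m₂) ^ 2 * e₃ := by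
  linear_combination (m₁ + m₂) ^ 2 * h₃ - ((m₁ + m₂) ^ 2 - 3 * (m₁ + m₂)) * (m₁ * a + m₂ * b) * h₂

end TwoPointIdentities

namespace MvPolynomial

theorem C_inv_mul_C_mul {σ K : Type*} [Field K] {d : K} (hd : d ≠ 0) (p : MvPolynomial σ K) :
    C d⁻¹ * (C d * p) = p := by
  rw [← mul_assoc, ← C_mul, inv_mul_cancel₀ hd, C_1, one_mul]

variable (σ R : Type*) [Fintype σ] [CommRing R]

theorem two_mul_esymm_two : 2 * esymm σ R 2 = psum σ R 1 ^ 2 - psum σ R 2 := by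
  have h := mul_esymm_eq_sum σ R 2
  simp only [Finset.sum_filter, Finset.Nat.sum_antidiagonal_eq_sum_range_succ_mk,
    Finset.sum_range_succ, Finset.sum_range_zero] at h
  norm_num only [esymm_zero, esymm_one, ← psum_one, ite_true, ite_false] at h
  linear_combination h

theorem three_mul_esymm_three :
    3 * esymm σ R 3 = psum σ R 3 - psum σ R 1 * psum σ R 2 + esymm σ R 2 * psum σ R 1 := by
  have h := mul_esymm_eq_sum σ R 3
  simp only [Finset.sum_filter, Finset.Nat.sum_antidiagonal_eq_sum_range_succ_mk,
    Finset.sum_range_succ, Finset.sum_range_zero] at h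
  norm_num only [esymm_zero, esymm_one, ← psum_one, ite_true, ite_false] at h
  linear_combination h

end MvPolynomial

section TwoPartSpecialization

variable (K : Type*) [Field K] (μ1 μ2 : ℕ)

noncomputable def psumBar (k : ℕ) : MvPolynomial (Fin 2) K :=
  (μ1 : MvPolynomial (Fin 2) K) * X 0 ^ k + (μ2 : MvPolynomial (Fin 2) K) * X 1 ^ k

theorem sigma2_psum (k : ℕ) : sigma2 K μ1 μ2 (psum (Fin (μ1 + μ2)) K k) = psumBar K μ1 μ2 k := by
  simp [psum, sigma2, psumBar, Fin.sum_univ_add]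

theorem sigma2_esymm (k : ℕ) : sigma2 K μ1 μ2 (esymm (Fin (μ1 + μ2)) K k) = ebar K μ1 μ2 k := rfl

theorem ebar_one : ebar K μ1 μ2 1 = psumBar K μ1 μ2 1 := by
  rw [ebar, esymm_one, ← psum_one, sigma2_psum]

theorem two_mul_ebar_two : 2 * ebar K μ1 μ2 2 = psumBar K μ1 μ2 1 ^ 2 - psumBar K μ1 μ2 2 := by
  simpa only [map_mul, map_sub, map_ofNat, map_pow, sigma2_psum, sigma2_esymm]
    using congrArg (sigma2 K μ1 μ2) (two_mul_esymm_two (Fin (μ1 + μ2)) K)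

theorem three_mul_ebar_three : 3 * ebar K μ1 μ2 3 = psumBar K μ1 μ2 3
    - psumBar K μ1 μ2 1 * psumBar K μ1 μ2 2 + ebar K μ1 μ2 2 * psumBar K μ1 μ2 1 := by
  simpa only [map_mul, map_sub, map_add, map_ofNat, sigma2_psum, sigma2_esymm]
    using congrArg (sigma2 K μ1 μ2) (three_mul_esymm_three (Fin (μ1 + μ2)) K)

end TwoPartSpecialization

section GistFactors

variable {K : Type*} [Field K] [CharZero K] {μ1 μ2 : ℕ}

theorem ebar_quadratic_eq_sq_sub (h1 : μ1 ≠ 0) (h2 : μ2 ≠ 0) :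
    C (((μ1 : K) * μ2)⁻¹) * (C (((μ1 + μ2 : ℕ) : K) - 1) * ebar K μ1 μ2 1 ^ 2
      - C (2 * ((μ1 + μ2 : ℕ) : K)) * ebar K μ1 μ2 2) = (X 0 - X 1) ^ 2 := by
  have hd : (μ1 : K) * μ2 ≠ 0 := mul_ne_zero (Nat.cast_ne_zero.2 h1) (Nat.cast_ne_zero.2 h2)
  have h₂ := two_mul_ebar_two K μ1 μ2
  simp only [psumBar, pow_one] at h₂
  calc _ = C ((μ1 : K) * μ2)⁻¹
          * (C ((μ1 : K) * μ2) * (X 0 - X 1 : MvPolynomial (Fin 2) K) ^ 2) := by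
        congr 1
        simp only [ebar_one, psumBar, pow_one, map_sub, map_mul, map_add, map_natCast, map_one,
          map_ofNat, Nat.cast_add]
        exact (mul_sq_sub_of_newton h₂).symm
    _ = _ := C_inv_mul_C_mul hd _

theorem ebar_cubic_eq_cube_sub (h1 : μ1 ≠ 0) (h2 : μ2 ≠ 0) (hne : μ1 ≠ μ2) :
    C ((-((((μ1 + μ2 : ℕ) : K) - 1) * (((μ1 + μ2 : ℕ) : K) - 2)))
        / ((μ1 : K) * μ2 * ((μ1 : K) - μ2))) * ebar K μ1 μ2 1 ^ 3
      + C ((3 * ((μ1 + μ2 : ℕ) : K) * (((μ1 + μ2 : ℕ) : K) - 2))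
        / ((μ1 : K) * μ2 * ((μ1 : K) - μ2))) * (ebar K μ1 μ2 1 * ebar K μ1 μ2 2)
      + C ((-(3 * ((μ1 + μ2 : ℕ) : K) ^ 2)) / ((μ1 : K) * μ2 * ((μ1 : K) - μ2)))
        * ebar K μ1 μ2 3 = (X 0 - X 1) ^ 3 := by
  have hd : (μ1 : K) * μ2 * (μ1 - μ2) ≠ 0 :=
    mul_ne_zero (mul_ne_zero (Nat.cast_ne_zero.2 h1) (Nat.cast_ne_zero.2 h2))
      (sub_ne_zero.2 (Nat.cast_injective.ne hne))
  have h₂ := two_mul_ebar_two K μ1 μ2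
  have h₃ := three_mul_ebar_three K μ1 μ2
  simp only [psumBar, pow_one] at h₂ h₃
  calc _ = C ((μ1 : K) * μ2 * (μ1 - μ2))⁻¹
        * (C (-((((μ1 + μ2 : ℕ) : K) - 1) * (((μ1 + μ2 : ℕ) : K) - 2))) * ebar K μ1 μ2 1 ^ 3
          + C (3 * ((μ1 + μ2 : ℕ) : K) * (((μ1 + μ2 : ℕ) : K) - 2))
            * (ebar K μ1 μ2 1 * ebar K μ1 μ2 2)
          - C (3 * ((μ1 + μ2 : ℕ) : K) ^ 2) * ebar K μ1 μ2 3) := by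
        simp only [div_eq_mul_inv, C_mul, map_neg]
        ring
    _ = C ((μ1 : K) * μ2 * (μ1 - μ2))⁻¹
          * (C ((μ1 : K) * μ2 * (μ1 - μ2)) * (X 0 - X 1 : MvPolynomial (Fin 2) K) ^ 3) := by
        congr 1
        simp only [ebar_one, psumBar, pow_one, map_sub, map_mul, map_add, map_neg, map_pow,
          map_natCast, map_one, map_ofNat, Nat.cast_add]
        exact (mul_cube_sub_of_newton h₂ h₃).symm
    _ = _ := C_inv_mul_C_mul hd _

end GistFactors

/-- The gist `F̊_n(z₁, z₂, z₃)` of `D⁺(μ)`, with `zᵢ` the variable `X (i - 1)`. -/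
noncomputable def gist (K : Type*) [Field K] (μ1 μ2 : ℕ) : MvPolynomial (Fin 3) K :=
  (C (((μ1 : K) * μ2)⁻¹) *
      (C (((μ1 + μ2 : ℕ) : K) - 1) * X 0 ^ 2 - C (2 * ((μ1 + μ2 : ℕ) : K)) * X 1))
        ^ ((μ1 + μ2 - 3) / 2)
    * (C ((-((((μ1 + μ2 : ℕ) : K) - 1) * (((μ1 + μ2 : ℕ) : K) - 2)))
          / ((μ1 : K) * μ2 * ((μ1 : K) - μ2))) * X 0 ^ 3
      + C ((3 * ((μ1 + μ2 : ℕ) : K) * (((μ1 + μ2 : ℕ) : K) - 2))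
          / ((μ1 : K) * μ2 * ((μ1 : K) - μ2))) * (X 0 * X 1)
      + C ((-(3 * ((μ1 + μ2 : ℕ) : K) ^ 2)) / ((μ1 : K) * μ2 * ((μ1 : K) - μ2))) * X 2)

/-- For `μ = (μ₁,μ₂)` with `μ₁ ≠ μ₂` and `n = μ₁ + μ₂` odd,
`D⁺(μ) = (r₁ − r₂)^n` is `μ`-symmetric with gist
`F̊_n(z₁,z₂,z₃) = (((n−1)z₁² − 2n z₂)/(μ₁μ₂))^{(n−3)/2} (k₁z₁³ + k₂z₁z₂ + k₃z₃)`: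
`F̊_n(ē₁,ē₂,ē₃) = (r₁ − r₂)^n`. -/
theorem stmt12 {K : Type*} [Field K] [CharZero K] (μ1 μ2 : ℕ) (h1 : 1 ≤ μ1) (h2 : 1 ≤ μ2)
    (hne : μ1 ≠ μ2) (hn : Odd (μ1 + μ2)) :
    (C (((μ1 : K) * μ2)⁻¹) *
          (C (((μ1 + μ2 : ℕ) : K) - 1) * ebar K μ1 μ2 1 ^ 2
            - C (2 * ((μ1 + μ2 : ℕ) : K)) * ebar K μ1 μ2 2)) ^ ((μ1 + μ2 - 3) / 2)
        * (C ((-((((μ1 + μ2 : ℕ) : K) - 1) * (((μ1 + μ2 : ℕ) : K) - 2)))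
              / ((μ1 : K) * μ2 * ((μ1 : K) - μ2))) * ebar K μ1 μ2 1 ^ 3
          + C ((3 * ((μ1 + μ2 : ℕ) : K) * (((μ1 + μ2 : ℕ) : K) - 2))
              / ((μ1 : K) * μ2 * ((μ1 : K) - μ2))) * (ebar K μ1 μ2 1 * ebar K μ1 μ2 2)
          + C ((-(3 * ((μ1 + μ2 : ℕ) : K) ^ 2))
              / ((μ1 : K) * μ2 * ((μ1 : K) - μ2))) * ebar K μ1 μ2 3)
        = ((X 0 : MvPolynomial (Fin 2) K) - X 1) ^ (μ1 + μ2) ∧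
    ∃ Fhat : MvPolynomial (Fin (μ1 + μ2)) K, Fhat.IsSymmetric ∧
      sigma2 K μ1 μ2 Fhat = ((X 0 : MvPolynomial (Fin 2) K) - X 1) ^ (μ1 + μ2) := by
  refine (fun hgist => ⟨hgist, _, (esymmAlgHom (Fin (μ1 + μ2)) K 3 (gist K μ1 μ2)).2, ?_⟩) ?_
  · rw [ebar_quadratic_eq_sq_sub (by omega) (by omega),
      ebar_cubic_eq_cube_sub (by omega) (by omega) hne, ← pow_mul, ← pow_add]
    obtain ⟨m, hm⟩ := hn
    congr 1
    omega
  · rw [esymmAlgHom_apply, comp_aeval_apply, ← hgist]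
    simp only [gist, map_mul, map_pow, map_sub, map_add, aeval_X, aeval_C, algebraMap_eq,
      sigma2_esymm, Fin.val_zero, Fin.val_one, Fin.val_two]
end

section
/- If μ = (μ, μ, …, μ) with m equal parts and n = mμ, then D⁺(μ) = ∏_{1≤i<j≤m}(r_i − r_j)^{2μ} is μ-symmetric, with lift ((1/μ^m) · S^n_{n−m})^μ. -/
open MvPolynomial

/-- The `(n-m)`-th subdiscriminant in `n` variables:
`S^n_{n-m} = Σ_{|I| = m} ∏_{i<j ∈ I} (x_i − x_j)²`. -/
noncomputable def subdisc (K : Type*) [Field K] (n m : ℕ) : MvPolynomial (Fin n) K :=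
  ∑ I ∈ Finset.powersetCard m (Finset.univ : Finset (Fin n)),
    ∏ p ∈ I.offDiag.filter (fun p => p.1 < p.2), (X p.1 - X p.2) ^ 2

/-!
Under the specialization `x_i ↦ r_{asg i}`, the term of `S^n_{n-m}` indexed by an `m`-subset `I`
vanishes unless `I` is a transversal of the fibres of `asg`, and then it becomes
`∏_{i<j} (r_i - r_j)²`. With fibres of size `μ` there are `μ^m` transversals, so the specialization
of `μ^{-m} • S^n_{n-m}` is `∏_{i<j} (r_i - r_j)²`; its `μ`-th power is `D⁺(μ)`. Symmetry holds
because a permutation of the variables permutes the `m`-subsets.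
-/

open Finset

theorem Finset.prod_offDiag_lt_image {α β M : Type*} [LinearOrder α] [LinearOrder β]
    [CommMonoid M] (I : Finset α) {f : α → β} (hf : Set.InjOn f I) {g : β → β → M}
    (hg : ∀ a b, g a b = g b a) :
    ∏ p ∈ (I.image f).offDiag with p.1 < p.2, g p.1 p.2
      = ∏ p ∈ I.offDiag with p.1 < p.2, g (f p.1) (f p.2) := by
  symm
  have hf' : ∀ a ∈ I, ∀ b ∈ I, f a = f b → a = b := fun a ha b hb => hf ha hb
  refine prod_nbij (fun p => (min (f p.1) (f p.2), max (f p.1) (f p.2))) ?_ ?_ ?_ ?_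
  · rintro ⟨a, b⟩ hp
    simp only [mem_filter, mem_offDiag, mem_image] at hp ⊢
    grind
  · rintro ⟨a, b⟩ hp ⟨c, d⟩ hq h
    simp only [coe_filter, mem_offDiag, Set.mem_ofPred_eq, Prod.mk.injEq] at hp hq h ⊢
    grind
  · rintro ⟨u, v⟩ hq
    simp only [coe_filter, mem_offDiag, mem_image, Set.mem_ofPred_eq, Set.mem_image,
      Prod.exists, Prod.mk.injEq] at hq ⊢
    obtain ⟨⟨⟨a, ha, rfl⟩, ⟨b, hb, rfl⟩, -⟩, h⟩ := hq
    rcases lt_trichotomy a b with hab | rfl | hab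
    · exact ⟨a, b, ⟨⟨ha, hb, hab.ne⟩, hab⟩, min_eq_left h.le, max_eq_right h.le⟩
    · exact absurd h (lt_irrefl _)
    · exact ⟨b, a, ⟨⟨hb, ha, hab.ne⟩, hab⟩, min_eq_right h.le, max_eq_left h.le⟩
  · rintro ⟨a, b⟩ -
    rcases le_total (f a) (f b) with h | h
    · simp [min_eq_left h, max_eq_right h]
    · simp [min_eq_right h, max_eq_left h, hg]

theorem Finset.prod_offDiag_lt_eq_zero_of_not_injOn {α β M : Type*} [LinearOrder α]
    [CommMonoidWithZero M] {I : Finset α} {f : α → β} (hf : ¬ Set.InjOn f I) {g : β → β → M}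
    (hg : ∀ b, g b b = 0) : ∏ p ∈ I.offDiag with p.1 < p.2, g (f p.1) (f p.2) = 0 := by
  obtain ⟨a, ha, b, hb, hfab, hab⟩ : ∃ a ∈ I, ∃ b ∈ I, f a = f b ∧ a ≠ b := by
    simpa [Set.InjOn] using hf
  refine prod_eq_zero (i := (min a b, max a b)) ?_ ?_
  · rcases lt_or_gt_of_ne hab with h | h <;> simp [h, h.le, h.ne, ha, hb]
  · rcases le_total a b with h | h <;> simp [h, hfab, hg]

/-- The transversals of the fibres of `f` correspond to the sections of `f`, i.e. to the elements
of `∏ b, f⁻¹{b}`. -/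
theorem Finset.card_filter_injOn_powersetCard {α β : Type*} [Fintype α] [Fintype β]
    [DecidableEq α] [DecidableEq β] (f : α → β)
    [DecidablePred fun I : Finset α => Set.InjOn f I] :
    #((powersetCard (Fintype.card β) (univ : Finset α)).filter
        fun I : Finset α => Set.InjOn f I)
      = ∏ b, #{a | f a = b} := by
  rw [← Fintype.card_piFinset]
  symm
  refine card_bij (fun g _ => univ.image g) ?_ ?_ ?_
  · intro g hg
    have hsec : ∀ b, f (g b) = b := by simpa [Fintype.mem_piFinset] using hg
    have hinj : Function.Injective g := Function.LeftInverse.injective hsec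
    simp only [mem_filter, mem_powersetCard_univ, card_image_of_injective _ hinj, card_univ,
      coe_image, coe_univ, Set.image_univ, true_and]
    rintro _ ⟨a, rfl⟩ _ ⟨b, rfl⟩ h
    rw [hsec, hsec] at h
    rw [h]
  · intro g hg g' hg' h
    have hsec : ∀ b, f (g b) = b := by simpa [Fintype.mem_piFinset] using hg
    have hsec' : ∀ b, f (g' b) = b := by simpa [Fintype.mem_piFinset] using hg'
    funext b
    obtain ⟨b', -, hb'⟩ := mem_image.mp (h ▸ mem_image_of_mem g (mem_univ b))
    rw [← hb', ← hsec b, ← hb', hsec']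
  · intro I hI
    rw [mem_filter, mem_powersetCard_univ] at hI
    have himage : I.image f = univ := by
      apply eq_univ_of_card
      rw [card_image_of_injOn hI.2, hI.1]
    choose g hgI hsec using fun b => mem_image.mp (himage ▸ mem_univ b)
    refine ⟨g, by simpa [Fintype.mem_piFinset] using hsec, ?_⟩
    apply eq_of_subset_of_card_le
    · simpa [subset_iff] using hgI
    · rw [card_image_of_injective _ (Function.LeftInverse.injective hsec), card_univ, hI.1]

theorem subdisc_isSymmetric (K : Type*) [Field K] (n m : ℕ) : (subdisc K n m).IsSymmetric := by
  intro σ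
  rw [subdisc, map_sum]
  refine sum_nbij' (image σ) (image σ.symm) ?_ ?_ ?_ ?_ ?_
  · simp [card_image_of_injective _ σ.injective]
  · simp [card_image_of_injective _ σ.symm.injective]
  · simp [image_image]
  · simp [image_image]
  · intro I _
    simp only [map_prod, map_pow, map_sub, rename_X]
    exact (prod_offDiag_lt_image I σ.injective.injOn fun a b => sub_sq_comm (X a) (X b)).symm

theorem aeval_X_comp_subdisc (K : Type*) [Field K] {n m : ℕ} (f : Fin n → Fin m) :
    aeval (R := K) (fun i => (X (f i) : MvPolynomial (Fin m) K)) (subdisc K n m)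
      = (∏ j, #{i | f i = j}) •
        ∏ p ∈ (univ : Finset (Fin m × Fin m)).filter (fun p => p.1 < p.2),
          (X p.1 - X p.2) ^ 2 := by
  classical
  have hterm : ∀ I ∈ powersetCard m (univ : Finset (Fin n)),
      aeval (fun i => (X (f i) : MvPolynomial (Fin m) K))
          (∏ p ∈ I.offDiag with p.1 < p.2, (X p.1 - X p.2 : MvPolynomial (Fin n) K) ^ 2)
        = if Set.InjOn f I then
            ∏ p ∈ (univ : Finset (Fin m × Fin m)).filter (fun p => p.1 < p.2),
              (X p.1 - X p.2) ^ 2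
          else 0 := by
    intro I hI
    rw [mem_powersetCard_univ] at hI
    simp only [map_prod, map_pow, map_sub, aeval_X]
    split_ifs with hinj
    · have himage : I.image f = univ := by
        apply eq_univ_of_card
        rw [card_image_of_injOn hinj, hI, Fintype.card_fin]
      rw [← prod_offDiag_lt_image I hinj fun a b => sub_sq_comm (X a) (X b), himage]
      congr 1
      ext p
      simpa using fun h : p.1 < p.2 => h.ne
    · exact prod_offDiag_lt_eq_zero_of_not_injOn (g := fun a b => (X a - X b) ^ 2) hinj
        fun b => by simp
  rw [subdisc, map_sum, sum_congr rfl hterm, ← sum_filter, sum_const,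
    ← card_filter_injOn_powersetCard f, Fintype.card_fin]

theorem stmt13_general {K : Type*} [Field K] [CharZero K] (m μv n : ℕ) (hμ : 1 ≤ μv)
    (asg : Fin n → Fin m)
    (hasg : ∀ j, (Finset.univ.filter (fun i => asg i = j)).card = μv) :
    ((((μv : K) ^ m)⁻¹ • subdisc K n m) ^ μv).IsSymmetric ∧
    MvPolynomial.aeval (R := K) (fun i => (X (asg i) : MvPolynomial (Fin m) K))
        ((((μv : K) ^ m)⁻¹ • subdisc K n m) ^ μv)
      = ∏ p ∈ (Finset.univ : Finset (Fin m × Fin m)).filter (fun p => p.1 < p.2),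
          (X p.1 - X p.2) ^ (2 * μv) := by
  refine ⟨fun e => by rw [map_pow, ((subdisc_isSymmetric K n m).smul _) e], ?_⟩
  have hμK : ((μv : K) ^ m) ≠ 0 := pow_ne_zero _ (Nat.cast_ne_zero.mpr (by omega))
  rw [map_pow, map_smul, aeval_X_comp_subdisc]
  simp only [hasg, prod_const, card_univ, Fintype.card_fin, ← Nat.cast_smul_eq_nsmul K, smul_smul,
    Nat.cast_pow, inv_mul_cancel₀ hμK, one_smul, ← prod_pow, ← pow_mul, mul_comm 2]

/-- If `μ = (μ,…,μ)` has `m` equal parts and `n = mμ`, then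
`D⁺(μ) = ∏_{i<j} (r_i − r_j)^{2μ}` is `μ`-symmetric with lift
`((1/μ^m) · S^n_{n−m})^μ`. -/
theorem stmt13 {K : Type*} [Field K] [CharZero K] (m μv n : ℕ) (hμ : 1 ≤ μv)
    (hn : n = m * μv)
    (asg : Fin n → Fin m) (hmono : Monotone asg)
    (hasg : ∀ j, (Finset.univ.filter (fun i => asg i = j)).card = μv) :
    ((((μv : K) ^ m)⁻¹ • subdisc K n m) ^ μv).IsSymmetric ∧
    MvPolynomial.aeval (R := K) (fun i => (X (asg i) : MvPolynomial (Fin m) K))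
        ((((μv : K) ^ m)⁻¹ • subdisc K n m) ^ μv)
      = ∏ p ∈ (Finset.univ : Finset (Fin m × Fin m)).filter (fun p => p.1 < p.2),
          (X p.1 - X p.2) ^ (2 * μv) :=
  stmt13_general m μv n hμ asg hasg
end
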